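/- The CF residual variance relates to the 2SLS residual variance by σ̂_u² = σ̂_{2sls}²(1 − t_{H₂}/n − H_n), where t_{H₂} = (β̂_ols−β̂_{2sls})^⊤[σ̂_{2sls}²((Ŷ₁^⊤M_{Z₁}Ŷ₁)^{-1} − (Y₁^⊤M_{Z₁}Y₁)^{-1})]^{-1}(β̂_ols−β̂_{2sls}) and H_n = (nσ̂_{2sls}²)^{-1}(β̂_ols−β̂_{2sls})^⊤(Y₁^⊤M_{Z₁}Y₁)(β̂_ols−β̂_{2sls}). -/

import Mathlib

open Matrix

noncomputable def proj {n : ℕ} {m : Type*} [Fintype m] [DecidableEq m]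
    (A : Matrix (Fin n) m ℝ) : Matrix (Fin n) (Fin n) ℝ :=
  A * (Aᵀ * A)⁻¹ * Aᵀ

noncomputable def annih {n : ℕ} {m : Type*} [Fintype m] [DecidableEq m]
    (A : Matrix (Fin n) m ℝ) : Matrix (Fin n) (Fin n) ℝ :=
  1 - proj A

lemma proj_transpose {n : ℕ} {m : Type*} [Fintype m] [DecidableEq m]
    (A : Matrix (Fin n) m ℝ) : (proj A)ᵀ = proj A := by
  simp only [proj, Matrix.transpose_mul, Matrix.transpose_transpose,
    Matrix.transpose_nonsing_inv, Matrix.mul_assoc]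

lemma annih_transpose {n : ℕ} {m : Type*} [Fintype m] [DecidableEq m]
    (A : Matrix (Fin n) m ℝ) : (annih A)ᵀ = annih A := by
  simp only [annih, Matrix.transpose_sub, Matrix.transpose_one, proj_transpose]

lemma proj_mul_self {n : ℕ} {m : Type*} [Fintype m] [DecidableEq m]
    (A : Matrix (Fin n) m ℝ) (h : Invertible (Aᵀ * A)) : proj A * A = A := by
  haveI := h
  simp only [proj, Matrix.mul_assoc, Matrix.inv_mul_of_invertible, Matrix.mul_one]

lemma proj_idem {n : ℕ} {m : Type*} [Fintype m] [DecidableEq m]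
    (A : Matrix (Fin n) m ℝ) (h : Invertible (Aᵀ * A)) : proj A * proj A = proj A := by
  have h1 : proj A * A = A := proj_mul_self A h
  calc proj A * proj A = (proj A * A) * (Aᵀ * A)⁻¹ * Aᵀ := by
        simp only [proj, Matrix.mul_assoc]
    _ = proj A := by rw [h1]; rfl

lemma annih_mul_eq_zero {n : ℕ} {m : Type*} [Fintype m] [DecidableEq m]
    (A : Matrix (Fin n) m ℝ) (h : Invertible (Aᵀ * A)) : annih A * A = 0 := by
  simp only [annih, Matrix.sub_mul, Matrix.one_mul, proj_mul_self A h, sub_self]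

theorem stmt_17 {n d k₁ k₂ : ℕ} (hn : 0 < n)
    (Y₁ : Matrix (Fin n) (Fin d) ℝ) (Y₂ : Matrix (Fin n) (Fin 1) ℝ)
    (Z₁ : Matrix (Fin n) (Fin k₁) ℝ) (Z₂ : Matrix (Fin n) (Fin k₂) ℝ)
    (Z : Matrix (Fin n) (Fin k₁ ⊕ Fin k₂) ℝ) (hZ : Z = fromCols Z₁ Z₂)
    (X : Matrix (Fin n) (Fin d ⊕ Fin k₁) ℝ) (hX : X = fromCols Y₁ Z₁)
    (Vhat : Matrix (Fin n) (Fin d) ℝ) (hV : Vhat = annih Z * Y₁)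
    (Yhat : Matrix (Fin n) (Fin d) ℝ) (hYhat : Yhat = proj Z * Y₁)
    (hZZ : Invertible (Zᵀ * Z)) (hZ₁Z₁ : Invertible (Z₁ᵀ * Z₁))
    (hXX : Invertible (Xᵀ * X)) (hXPX : Invertible (Xᵀ * proj Z * X))
    (hYMZY : Invertible (Y₁ᵀ * annih Z * Y₁))
    (hYMY : Invertible (Y₁ᵀ * annih Z₁ * Y₁))
    (hYPY : Invertible (Y₁ᵀ * (proj Z - proj Z₁) * Y₁))
    (hVMV : Invertible (Vhatᵀ * annih X * Vhat))
    (hYhMYh : Invertible (Yhatᵀ * annih Z₁ * Yhat))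
    (hdiff : ((Yhatᵀ * annih Z₁ * Yhat)⁻¹ - (Y₁ᵀ * annih Z₁ * Y₁)⁻¹).PosDef)
    (θ2sls : Matrix (Fin d ⊕ Fin k₁) (Fin 1) ℝ)
    (hθ2sls : θ2sls = (Xᵀ * proj Z * X)⁻¹ * (Xᵀ * proj Z * Y₂))
    (βols β2sls ρcf : Matrix (Fin d) (Fin 1) ℝ)
    (hβols : βols = (Y₁ᵀ * annih Z₁ * Y₁)⁻¹ * (Y₁ᵀ * annih Z₁ * Y₂))
    (hβ2sls : β2sls = (Y₁ᵀ * (proj Z - proj Z₁) * Y₁)⁻¹ *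
      (Y₁ᵀ * (proj Z - proj Z₁) * Y₂))
    (hρ : ρcf = (Vhatᵀ * annih X * Vhat)⁻¹ * (Vhatᵀ * annih X * Y₂))
    (uhat : Matrix (Fin n) (Fin 1) ℝ)
    (huhat : uhat = Y₂ - X * θ2sls - Vhat * ρcf)
    (σu2 σ2sls2 : ℝ)
    (hσu2 : σu2 = (uhatᵀ * uhat) 0 0 / n)
    (hσ2sls2 : σ2sls2 = ((Y₂ - X * θ2sls)ᵀ * (Y₂ - X * θ2sls)) 0 0 / n)
    (hσpos : 0 < σ2sls2)
    (tH2 Hn : ℝ)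
    (htH2 : tH2 = ((βols - β2sls)ᵀ *
      (σ2sls2 • ((Yhatᵀ * annih Z₁ * Yhat)⁻¹ - (Y₁ᵀ * annih Z₁ * Y₁)⁻¹))⁻¹ *
      (βols - β2sls)) 0 0)
    (hHn : Hn = ((βols - β2sls)ᵀ * (Y₁ᵀ * annih Z₁ * Y₁) *
      (βols - β2sls)) 0 0 / (n * σ2sls2)) :
    σu2 = σ2sls2 * (1 - tH2 / n - Hn) := by
  haveI := hZZ; haveI := hZ₁Z₁; haveI := hXX; haveI := hXPX
  haveI := hYMZY; haveI := hYMY; haveI := hYPY; haveI := hVMV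
  -- basic projector facts
  have hPZ1 : proj Z * Z₁ = Z₁ := by
    have h0 : Z * Matrix.fromRows (1 : Matrix (Fin k₁) (Fin k₁) ℝ)
        (0 : Matrix (Fin k₂) (Fin k₁) ℝ) = Z₁ := by
      rw [hZ, fromCols_mul_fromRows]; simp
    rw [← h0, ← Matrix.mul_assoc, proj_mul_self Z hZZ]
  have hQZ1 : proj Z₁ * Z₁ = Z₁ := proj_mul_self Z₁ hZ₁Z₁
  have hprojQ : proj Z₁ = Z₁ * (Z₁ᵀ * Z₁)⁻¹ * Z₁ᵀ := rfl
  have hPQ : proj Z * proj Z₁ = proj Z₁ := by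
    conv_lhs => rw [hprojQ]
    rw [← Matrix.mul_assoc, ← Matrix.mul_assoc, hPZ1, ← hprojQ]
  have hQP : proj Z₁ * proj Z = proj Z₁ := by
    have h1 := congrArg Matrix.transpose hPQ
    simpa only [Matrix.transpose_mul, proj_transpose] using h1
  have hZ1P : Z₁ᵀ * proj Z = Z₁ᵀ := by
    have h1 := congrArg Matrix.transpose hPZ1
    simpa only [Matrix.transpose_mul, proj_transpose] using h1
  -- 2SLS residual s
  set s := Y₂ - X * θ2sls with hs
  set δ := βols - β2sls with hδ
  have hXPs : Xᵀ * proj Z * s = 0 := by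
    have h1 : Xᵀ * proj Z * (X * θ2sls) = Xᵀ * proj Z * Y₂ := by
      rw [← Matrix.mul_assoc (Xᵀ * proj Z) X θ2sls, hθ2sls,
        Matrix.mul_inv_cancel_left_of_invertible]
    rw [hs, Matrix.mul_sub, h1, sub_self]
  have hXPs' : Matrix.fromRows (Y₁ᵀ * proj Z * s) (Z₁ᵀ * proj Z * s) = 0 := by
    rw [← hXPs, hX, transpose_fromCols, fromRows_mul, fromRows_mul]
  have hY1Ps : Y₁ᵀ * proj Z * s = 0 := by
    ext i j
    have h1 := congrFun (congrFun hXPs' (Sum.inl i)) j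
    simpa only [Matrix.fromRows_apply_inl, Matrix.zero_apply] using h1
  have hZ1s : Z₁ᵀ * s = 0 := by
    rw [← hZ1P]
    ext i j
    have h1 := congrFun (congrFun hXPs' (Sum.inr i)) j
    simpa only [Matrix.fromRows_apply_inr, Matrix.zero_apply] using h1
  have hQs : proj Z₁ * s = 0 := by
    simp only [proj, Matrix.mul_assoc, hZ1s, Matrix.mul_zero]
  -- annih Z facts
  have hMt : (annih Z)ᵀ = annih Z := annih_transpose Z
  have hMM : annih Z * annih Z = annih Z := by
    simp only [annih, Matrix.sub_mul, Matrix.mul_sub, Matrix.one_mul, Matrix.mul_one,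
      proj_idem Z hZZ]
    abel
  have hMZ1 : annih Z * Z₁ = 0 := by
    simp only [annih, Matrix.sub_mul, Matrix.one_mul, hPZ1, sub_self]
  have hVt : Vhatᵀ = Y₁ᵀ * annih Z := by rw [hV, Matrix.transpose_mul, hMt]
  set D := Y₁ᵀ * annih Z * Y₁ with hD
  have hDt : Dᵀ = D := by
    rw [hD]
    simp only [Matrix.transpose_mul, Matrix.transpose_transpose, hMt, Matrix.mul_assoc]
  have hVtV : Vhatᵀ * Vhat = D := by
    rw [hVt, hV, hD, Matrix.mul_assoc, ← Matrix.mul_assoc (annih Z) (annih Z) Y₁, hMM,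
      ← Matrix.mul_assoc]
  have hVtY1 : Vhatᵀ * Y₁ = D := by rw [hVt, hD]
  have hVtZ1 : Vhatᵀ * Z₁ = 0 := by rw [hVt, Matrix.mul_assoc, hMZ1, Matrix.mul_zero]
  set F := Matrix.fromCols (1 : Matrix (Fin d) (Fin d) ℝ)
    (0 : Matrix (Fin d) (Fin k₁) ℝ) with hF
  have hFt : Fᵀ = Matrix.fromRows (1 : Matrix (Fin d) (Fin d) ℝ)
      (0 : Matrix (Fin k₁) (Fin d) ℝ) := by
    rw [hF, transpose_fromCols]; simp
  have hVtX : Vhatᵀ * X = D * F := by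
    simp only [hX, hF, Matrix.mul_fromCols, hVtY1, hVtZ1, Matrix.mul_one, Matrix.mul_zero]
  have hXtV : Xᵀ * Vhat = Fᵀ * D := by
    have h1 := congrArg Matrix.transpose hVtX
    simpa only [Matrix.transpose_mul, Matrix.transpose_transpose, hDt] using h1
  have hVts : Vhatᵀ * s = Y₁ᵀ * s := by
    rw [hVt]
    simp only [annih, Matrix.mul_sub, Matrix.mul_one, Matrix.sub_mul, hY1Ps, sub_zero]
  have hXts : Xᵀ * s = Fᵀ * (Y₁ᵀ * s) := by
    rw [hX, hFt, transpose_fromCols, fromRows_mul, fromRows_mul, hZ1s]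
    simp
  -- annih X facts
  have hMXX : annih X * X = 0 := annih_mul_eq_zero X hXX
  have hρeq : Vhatᵀ * annih X * Vhat * ρcf = Vhatᵀ * annih X * s := by
    rw [hρ, Matrix.mul_inv_cancel_left_of_invertible]
    have h2 : Vhatᵀ * annih X * (X * θ2sls) = 0 := by
      rw [Matrix.mul_assoc, ← Matrix.mul_assoc (annih X) X θ2sls, hMXX, Matrix.zero_mul,
        Matrix.mul_zero]
    rw [hs, Matrix.mul_sub, h2, sub_zero]
  set G := (Xᵀ * X)⁻¹ with hG
  set W := F * G * Fᵀ with hW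
  have hprojX : Vhatᵀ * proj X * Vhat = D * W * D := by
    calc Vhatᵀ * proj X * Vhat
        = (Vhatᵀ * X) * (G * (Xᵀ * Vhat)) := by
          simp only [proj, ← hG, Matrix.mul_assoc]
      _ = (D * F) * (G * (Fᵀ * D)) := by rw [hVtX, hXtV]
      _ = D * W * D := by simp only [hW, Matrix.mul_assoc]
  have hVMVeq : Vhatᵀ * annih X * Vhat = (1 - D * W) * D := by
    calc Vhatᵀ * annih X * Vhat = Vhatᵀ * Vhat - Vhatᵀ * proj X * Vhat := by
          simp only [annih, Matrix.mul_sub, Matrix.mul_one, Matrix.sub_mul]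
      _ = D - D * W * D := by rw [hVtV, hprojX]
      _ = (1 - D * W) * D := by simp only [Matrix.sub_mul, Matrix.one_mul]
  have hVMXs : Vhatᵀ * annih X * s = (1 - D * W) * (Y₁ᵀ * s) := by
    calc Vhatᵀ * annih X * s = Vhatᵀ * s - Vhatᵀ * proj X * s := by
          simp only [annih, Matrix.mul_sub, Matrix.mul_one, Matrix.sub_mul]
      _ = Y₁ᵀ * s - D * W * (Y₁ᵀ * s) := by
          rw [hVts]
          congr 1
          calc Vhatᵀ * proj X * s = (Vhatᵀ * X) * (G * (Xᵀ * s)) := by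
                simp only [proj, ← hG, Matrix.mul_assoc]
            _ = (D * F) * (G * (Fᵀ * (Y₁ᵀ * s))) := by rw [hVtX, hXts]
            _ = D * W * (Y₁ᵀ * s) := by simp only [hW, Matrix.mul_assoc]
      _ = (1 - D * W) * (Y₁ᵀ * s) := by simp only [Matrix.sub_mul, Matrix.one_mul]
  have hDinvI : Invertible D⁻¹ := by
    rw [← Matrix.invOf_eq_nonsing_inv]; exact invertibleInvOf
  have h1DW : Invertible (1 - D * W) := by
    have h1 : (1 - D * W) = (Vhatᵀ * annih X * Vhat) * D⁻¹ := by
      rw [hVMVeq, Matrix.mul_inv_cancel_right_of_invertible]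
    rw [h1]
    exact hVMV.mul hDinvI
  have hDρ : D * ρcf = Y₁ᵀ * s := by
    have h1 : (1 - D * W) * (D * ρcf) = (1 - D * W) * (Y₁ᵀ * s) := by
      rw [← Matrix.mul_assoc (1 - D * W) D ρcf, ← hVMVeq, hρeq, hVMXs]
    haveI := h1DW
    calc D * ρcf = (1 - D * W)⁻¹ * ((1 - D * W) * (D * ρcf)) := by
          rw [Matrix.inv_mul_cancel_left_of_invertible]
      _ = (1 - D * W)⁻¹ * ((1 - D * W) * (Y₁ᵀ * s)) := by rw [h1]
      _ = Y₁ᵀ * s := by rw [Matrix.inv_mul_cancel_left_of_invertible]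
  -- OLS / 2SLS side
  set B := Y₁ᵀ * annih Z₁ * Y₁ with hB
  set C := Y₁ᵀ * (proj Z - proj Z₁) * Y₁ with hC
  have hNZ1 : annih Z₁ * Z₁ = 0 := annih_mul_eq_zero Z₁ hZ₁Z₁
  have hNt : (annih Z₁)ᵀ = annih Z₁ := annih_transpose Z₁
  have hBt : Bᵀ = B := by
    rw [hB]
    simp only [Matrix.transpose_mul, Matrix.transpose_transpose, hNt, Matrix.mul_assoc]
  have hNs : annih Z₁ * s = s := by
    simp only [annih, Matrix.sub_mul, Matrix.one_mul, hQs, sub_zero]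
  have hY1NX : Y₁ᵀ * annih Z₁ * X = B * F := by
    have hNZ1' : Y₁ᵀ * annih Z₁ * Z₁ = 0 := by
      rw [Matrix.mul_assoc, hNZ1, Matrix.mul_zero]
    simp only [hX, hF, Matrix.mul_fromCols, hNZ1', Matrix.mul_one, Matrix.mul_zero, ← hB]
  have hY1PQX : Y₁ᵀ * (proj Z - proj Z₁) * X = C * F := by
    have h1 : Y₁ᵀ * (proj Z - proj Z₁) * Z₁ = 0 := by
      rw [Matrix.mul_assoc, Matrix.sub_mul, hPZ1, hQZ1, sub_self, Matrix.mul_zero]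
    simp only [hX, hF, Matrix.mul_fromCols, h1, Matrix.mul_one, Matrix.mul_zero, ← hC]
  have hY2 : Y₂ = s + X * θ2sls := by rw [hs]; abel
  have hPQs : Y₁ᵀ * (proj Z - proj Z₁) * s = 0 := by
    rw [Matrix.mul_sub Y₁ᵀ (proj Z) (proj Z₁), Matrix.sub_mul, hY1Ps,
      Matrix.mul_assoc Y₁ᵀ (proj Z₁) s, hQs, Matrix.mul_zero, sub_zero]
  have hCβ : C * β2sls = C * (F * θ2sls) := by
    rw [hβ2sls, Matrix.mul_inv_cancel_left_of_invertible, hY2, Matrix.mul_add, hPQs,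
      ← Matrix.mul_assoc (Y₁ᵀ * (proj Z - proj Z₁)) X θ2sls, hY1PQX, zero_add,
      Matrix.mul_assoc]
  have hβF : β2sls = F * θ2sls := by
    calc β2sls = C⁻¹ * (C * β2sls) := by rw [Matrix.inv_mul_cancel_left_of_invertible]
      _ = C⁻¹ * (C * (F * θ2sls)) := by rw [hCβ]
      _ = F * θ2sls := by rw [Matrix.inv_mul_cancel_left_of_invertible]
  have hBβ : B * βols = Y₁ᵀ * annih Z₁ * Y₂ := by
    rw [hβols, Matrix.mul_inv_cancel_left_of_invertible]
  have hY1sB : Y₁ᵀ * s = B * δ := by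
    calc Y₁ᵀ * s = Y₁ᵀ * annih Z₁ * s := by rw [Matrix.mul_assoc, hNs]
      _ = Y₁ᵀ * annih Z₁ * Y₂ - Y₁ᵀ * annih Z₁ * (X * θ2sls) := by
          rw [hs, Matrix.mul_sub]
      _ = B * βols - B * (F * θ2sls) := by
          rw [← hBβ, ← Matrix.mul_assoc (Y₁ᵀ * annih Z₁) X θ2sls, hY1NX,
            Matrix.mul_assoc B F θ2sls]
      _ = B * δ := by rw [hδ, hβF, Matrix.mul_sub]
  have hDρB : D * ρcf = B * δ := hDρ.trans hY1sB
  have hρval : ρcf = D⁻¹ * (B * δ) := by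
    rw [← hDρB, Matrix.inv_mul_cancel_left_of_invertible]
  -- residual identity
  have hVtsB : Vhatᵀ * s = B * δ := hVts.trans hY1sB
  have hVρs : (Vhat * ρcf)ᵀ * s = ρcfᵀ * (B * δ) := by
    rw [Matrix.transpose_mul, Matrix.mul_assoc, hVtsB]
  have hVρVρ : (Vhat * ρcf)ᵀ * (Vhat * ρcf) = ρcfᵀ * (B * δ) := by
    rw [Matrix.transpose_mul, Matrix.mul_assoc, ← Matrix.mul_assoc Vhatᵀ Vhat ρcf, hVtV, hDρB]
  have hsVρ : sᵀ * (Vhat * ρcf) = δᵀ * B * (D⁻¹ * (B * δ)) := by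
    rw [← Matrix.mul_assoc sᵀ Vhat ρcf]
    have h1 : sᵀ * Vhat = δᵀ * B := by
      have h2 := congrArg Matrix.transpose hVtsB
      simpa only [Matrix.transpose_mul, Matrix.transpose_transpose, hBt] using h2
    rw [h1, hρval, Matrix.mul_assoc]
  have huu : uhatᵀ * uhat = sᵀ * s - δᵀ * B * (D⁻¹ * (B * δ)) := by
    rw [huhat, Matrix.transpose_sub,
      Matrix.sub_mul sᵀ (Vhat * ρcf)ᵀ (s - Vhat * ρcf),
      Matrix.mul_sub sᵀ s (Vhat * ρcf),
      Matrix.mul_sub (Vhat * ρcf)ᵀ s (Vhat * ρcf),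
      hVρs, hVρVρ, hsVρ]
    abel
  -- decompose the quadratic form
  have hBCD : B = C + D := by
    rw [hB, hC, hD]
    have h1 : annih Z₁ = (proj Z - proj Z₁) + annih Z := by
      simp only [annih]; abel
    rw [h1, Matrix.mul_add, Matrix.add_mul]
  have hq : B * (D⁻¹ * (B * δ)) = B * (D⁻¹ * C) * δ + B * δ := by
    calc B * (D⁻¹ * (B * δ)) = B * (D⁻¹ * ((C + D) * δ)) := by rw [hBCD]
      _ = B * (D⁻¹ * (C * δ)) + B * δ := by
          rw [Matrix.add_mul, Matrix.mul_add, Matrix.inv_mul_cancel_left_of_invertible,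
            Matrix.mul_add]
      _ = B * (D⁻¹ * C) * δ + B * δ := by simp only [Matrix.mul_assoc]
  have huu3 : uhatᵀ * uhat = sᵀ * s - (δᵀ * (B * (D⁻¹ * C)) * δ + δᵀ * B * δ) := by
    rw [huu, Matrix.mul_assoc δᵀ B (D⁻¹ * (B * δ)), hq, Matrix.mul_add]
    simp only [Matrix.mul_assoc]
  -- the Hausman-type inverse identity
  have hChat : Yhatᵀ * annih Z₁ * Yhat = C := by
    have hYht : Yhatᵀ = Y₁ᵀ * proj Z := by rw [hYhat, Matrix.transpose_mul, proj_transpose]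
    have hPNP : proj Z * annih Z₁ * proj Z = proj Z - proj Z₁ := by
      simp only [annih, Matrix.mul_sub, Matrix.mul_one, Matrix.sub_mul,
        proj_idem Z hZZ, hPQ, hQP]
    rw [hYht, hYhat]
    calc Y₁ᵀ * proj Z * annih Z₁ * (proj Z * Y₁)
        = Y₁ᵀ * (proj Z * annih Z₁ * proj Z * Y₁) := by
          simp only [Matrix.mul_assoc]
      _ = Y₁ᵀ * ((proj Z - proj Z₁) * Y₁) := by rw [hPNP]
      _ = C := by rw [hC, Matrix.mul_assoc]
  have hprod : (C⁻¹ - B⁻¹) * (B * (D⁻¹ * C)) = 1 := by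
    calc (C⁻¹ - B⁻¹) * (B * (D⁻¹ * C))
        = C⁻¹ * (B * (D⁻¹ * C)) - D⁻¹ * C := by
          rw [Matrix.sub_mul, Matrix.inv_mul_cancel_left_of_invertible]
      _ = C⁻¹ * ((C + D) * (D⁻¹ * C)) - D⁻¹ * C := by rw [hBCD]
      _ = C⁻¹ * (C * (D⁻¹ * C) + C) - D⁻¹ * C := by
          rw [Matrix.add_mul, Matrix.mul_inv_cancel_left_of_invertible]
      _ = D⁻¹ * C + C⁻¹ * C - D⁻¹ * C := by
          rw [Matrix.mul_add, Matrix.inv_mul_cancel_left_of_invertible]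
      _ = 1 := by rw [Matrix.inv_mul_of_invertible]; abel
  have hσne : σ2sls2 ≠ 0 := ne_of_gt hσpos
  have hsmulinv : (σ2sls2 • (C⁻¹ - B⁻¹))⁻¹ = σ2sls2⁻¹ • (B * (D⁻¹ * C)) := by
    apply Matrix.inv_eq_right_inv
    rw [Matrix.smul_mul, Matrix.mul_smul, smul_smul, mul_inv_cancel₀ hσne, one_smul, hprod]
  rw [hChat] at htH2
  have htH2' : σ2sls2 * tH2 = (δᵀ * (B * (D⁻¹ * C)) * δ) 0 0 := by
    rw [htH2, hsmulinv, Matrix.mul_smul, Matrix.smul_mul, Matrix.smul_apply, smul_eq_mul,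
      ← mul_assoc, mul_inv_cancel₀ hσne, one_mul]
  -- scalar assembly
  set a := (sᵀ * s) 0 0 with ha
  set q1 := (δᵀ * (B * (D⁻¹ * C)) * δ) 0 0 with hq1
  set q2 := (δᵀ * B * δ) 0 0 with hq2
  have e1 : (uhatᵀ * uhat) 0 0 = a - (q1 + q2) := by
    rw [huu3]; simp [Matrix.sub_apply, Matrix.add_apply]; rfl
  have hnne : (n : ℝ) ≠ 0 := Nat.cast_ne_zero.mpr hn.ne'
  have hane : a ≠ 0 := by
    intro h
    rw [hσ2sls2, h, zero_div] at hσpos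
    exact lt_irrefl 0 hσpos
  have htH2val : tH2 = q1 / σ2sls2 := by
    rw [eq_div_iff hσne]
    linarith [htH2']
  rw [hσu2, e1, htH2val, hHn, hσ2sls2]
  field_simp
  ring
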